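/- arXiv:2401.06284 — 6 statements merged into one kernel-verified Lean document; each statement's English description precedes it below -/
import Mathlib

section
/- Let U_{ij} = b_{ij} e_i e_j^* for i > j and U_{ii} = (b_{ii}/√2) e_i e_i^*, with b_{ij} = b_{ji} ≥ 0 and σ_*^2 := max_{i,j} b_{ij}^2. For any n×n matrices M_1, M_2, M_3, M_4 with nonnegative entries, ∑_{i≥j, k≥l} ∑_{ε,δ ∈ {1,*}} tr(U_{ij}^ε M_1 U_{kl}^δ M_2 U_{ij}^{!ε} M_3 U_{kl}^{!δ} M_4) ≤ σ_*^4 tr(M_3 M_2 M_1 M_4), where !1 := * and !* := 1, tr denotes the normalized trace, and equality holds when b_{ij} = 1 for all i,j. -/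
open Matrix Finset
open scoped ComplexOrder

/-- `A ^ε` for `ε ∈ {1, *}`: `adjPow A true = A`, `adjPow A false = Aᴴ`. -/
noncomputable def adjPow {n : ℕ} (A : Matrix (Fin n) (Fin n) ℂ) (e : Bool) :
    Matrix (Fin n) (Fin n) ℂ :=
  if e then A else Aᴴ

/-!
For `i ≥ j`, `U_{ij} = c_{ij} E_{ij}` with `c_{ij}` real (`b_{ij}`, or `b_{ii}/√2` on the
diagonal), so each trace in the sum is `c_{ij}^2 c_{kl}^2 W_{pqrs}`, where
`W_{pqrs} = M₁ q r * M₂ s q * M₃ p s * M₄ r p` (`crossingTerm`) and `(p, q)` is `(i, j)` or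
`(j, i)` according to `ε`, likewise `(r, s)` according to `δ`. Summing over `ε` turns the sum
over `i ≥ j` into a sum over all ordered pairs with weight `b_{pq}^2`: off the diagonal both
orientations occur, on it the two equal terms make up for the factor `1/√2`. So the left side
is `∑ b_{pq}^2 b_{rs}^2 W_{pqrs}`, whereas `tr (M₃ M₂ M₁ M₄) = ∑ W_{pqrs}` with `W ≥ 0`;
comparing `b^2 ≤ σ_*^2` termwise gives the inequality, and both sides agree when `b ≡ 1`.
-/

theorem sum_filter_le_mul_add_swap {ι R : Type*} [Fintype ι] [LinearOrder ι]
    [NonUnitalNonAssocSemiring R] {B C : ι → ι → R} (hB : ∀ i j, B i j = B j i)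
    (hoff : ∀ i j, j < i → C i j = B i j) (hdiag : ∀ i, C i i + C i i = B i i)
    (f : ι → ι → R) :
    ∑ i, ∑ j ∈ univ.filter (· ≤ i), C i j * (f i j + f j i) = ∑ i, ∑ j, B i j * f i j := by
  have hweight : ∀ i j, ((if j ≤ i then C i j else 0) + if i ≤ j then C j i else 0) = B i j := by
    intro i j
    rcases lt_trichotomy j i with h | rfl | h
    · simp [h.le, h.not_ge, hoff i j h]
    · simp [hdiag]
    · simp [h.le, h.not_ge, hoff j i h, hB i j]
  calc ∑ i, ∑ j ∈ univ.filter (· ≤ i), C i j * (f i j + f j i)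
      = ∑ i, ∑ j, (if j ≤ i then C i j else 0) * f i j
        + ∑ i, ∑ j, (if j ≤ i then C i j else 0) * f j i := by
        simp only [sum_filter, ite_mul, zero_mul, mul_add, ← sum_add_distrib]
        refine sum_congr rfl fun i _ => sum_congr rfl fun j _ => ?_
        split_ifs <;> simp
    _ = ∑ i, ∑ j, (if j ≤ i then C i j else 0) * f i j
        + ∑ i, ∑ j, (if i ≤ j then C j i else 0) * f i j := by
        rw [sum_comm (f := fun i j => (if j ≤ i then C i j else 0) * f j i)]
    _ = ∑ i, ∑ j, B i j * f i j := by
        simp only [← sum_add_distrib, ← add_mul, hweight]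

def crossingTerm {ι R : Type*} [Mul R] (M₁ M₂ M₃ M₄ : Matrix ι ι R) (p q r s : ι) : R :=
  M₁ q r * M₂ s q * M₃ p s * M₄ r p

theorem trace_single_mul_single_mul_single_mul_single {ι R : Type*} [Fintype ι] [DecidableEq ι]
    [CommSemiring R] (x y : R) (p q r s : ι) (M₁ M₂ M₃ M₄ : Matrix ι ι R) :
    trace (single p q x * M₁ * single r s y * M₂ * single q p x * M₃ * single s r y * M₄)
      = x ^ 2 * y ^ 2 * crossingTerm M₁ M₂ M₃ M₄ p q r s := by
  simp only [single_mul_mul_single, trace_single_mul, smul_eq_mul, crossingTerm]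
  ring

theorem trace_mul_mul_mul_eq_sum_crossingTerm {ι R : Type*} [Fintype ι] [CommSemiring R]
    (M₁ M₂ M₃ M₄ : Matrix ι ι R) :
    trace (M₃ * M₂ * M₁ * M₄) = ∑ p, ∑ q, ∑ r, ∑ s, crossingTerm M₁ M₂ M₃ M₄ p q r s := by
  simp only [trace, Matrix.diag, mul_apply, sum_mul, crossingTerm]
  refine sum_congr rfl fun p _ => ?_
  rw [sum_comm]
  refine sum_congr rfl fun q _ => sum_congr rfl fun r _ => sum_congr rfl fun s _ => ?_
  ring

theorem adjPow_single_ofReal {n : ℕ} (p q : Fin n) (x : ℝ) (e : Bool) :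
    adjPow (single p q (x : ℂ)) e = if e then single p q (x : ℂ) else single q p (x : ℂ) := by
  cases e <;> simp [adjPow]

theorem sum_bool_trace_adjPow_single {n : ℕ} (x y : ℝ) (p q r s : Fin n)
    (M₁ M₂ M₃ M₄ : Matrix (Fin n) (Fin n) ℂ) :
    ∑ e : Bool, ∑ d : Bool,
        trace (adjPow (single p q (x : ℂ)) e * M₁ * adjPow (single r s (y : ℂ)) d * M₂ *
          adjPow (single p q (x : ℂ)) (!e) * M₃ * adjPow (single r s (y : ℂ)) (!d) * M₄)
      = (x : ℂ) ^ 2 * ((y : ℂ) ^ 2 *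
          ((crossingTerm M₁ M₂ M₃ M₄ p q r s + crossingTerm M₁ M₂ M₃ M₄ q p r s)
            + (crossingTerm M₁ M₂ M₃ M₄ p q s r + crossingTerm M₁ M₂ M₃ M₄ q p s r))) := by
  simp only [Fintype.sum_bool, Bool.not_true, Bool.not_false, adjPow_single_ofReal,
    if_true, Bool.false_eq_true, if_false, trace_single_mul_single_mul_single_mul_single]
  ring

theorem sum_crossing_eq_sum_sq_mul_crossingTerm {n : ℕ} {b : Fin n → Fin n → ℝ}
    (hb_symm : ∀ i j, b i j = b j i) {U : Fin n → Fin n → Matrix (Fin n) (Fin n) ℂ}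
    (hU : ∀ i j : Fin n, j < i → U i j = ((b i j : ℝ) : ℂ) • Matrix.single i j 1)
    (hUd : ∀ i : Fin n, U i i = ((b i i / Real.sqrt 2 : ℝ) : ℂ) • Matrix.single i i 1)
    (M₁ M₂ M₃ M₄ : Matrix (Fin n) (Fin n) ℂ) :
    ∑ i : Fin n, ∑ j ∈ univ.filter (· ≤ i), ∑ k : Fin n, ∑ l ∈ univ.filter (· ≤ k),
        ∑ e : Bool, ∑ d : Bool,
          trace (adjPow (U i j) e * M₁ * adjPow (U k l) d * M₂ *
            adjPow (U i j) (!e) * M₃ * adjPow (U k l) (!d) * M₄)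
      = ∑ p, ∑ q, (b p q : ℂ) ^ 2 *
          ∑ r, ∑ s, (b r s : ℂ) ^ 2 * crossingTerm M₁ M₂ M₃ M₄ p q r s := by
  set W := crossingTerm M₁ M₂ M₃ M₄
  set c : Fin n → Fin n → ℝ := fun i j => if i = j then b i i / Real.sqrt 2 else b i j
  have hUc : ∀ i j, j ≤ i → U i j = single i j (c i j : ℂ) := by
    intro i j hji
    rcases hji.lt_or_eq with h | rfl
    · simp [c, hU i j h, h.ne', smul_single]
    · simp [c, hUd, smul_single]
  have hsymm : ∀ i j, (b i j : ℂ) ^ 2 = (b j i : ℂ) ^ 2 := fun i j => by rw [hb_symm]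
  have hoff : ∀ i j, j < i → (c i j : ℂ) ^ 2 = (b i j : ℂ) ^ 2 := fun i j h => by
    simp [c, h.ne']
  have hdiag : ∀ i, (c i i : ℂ) ^ 2 + (c i i : ℂ) ^ 2 = (b i i : ℂ) ^ 2 := fun i => by
    have h2 : ((Real.sqrt 2 : ℝ) : ℂ) ^ 2 = 2 := by exact_mod_cast Real.sq_sqrt zero_le_two
    simp only [c, if_pos rfl, Complex.ofReal_div, div_pow, h2]
    ring
  have reindex := sum_filter_le_mul_add_swap hsymm hoff hdiag
  set G : Fin n → Fin n → ℂ := fun p q => ∑ r, ∑ s, (b r s : ℂ) ^ 2 * W p q r s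
  calc _ = ∑ i, ∑ j ∈ univ.filter (· ≤ i), (c i j : ℂ) ^ 2 *
          ∑ k, ∑ l ∈ univ.filter (· ≤ k), (c k l : ℂ) ^ 2 *
            ((W i j k l + W j i k l) + (W i j l k + W j i l k)) := by
        refine sum_congr rfl fun i _ => sum_congr rfl fun j hj => ?_
        simp only [mul_sum]
        refine sum_congr rfl fun k _ => sum_congr rfl fun l hl => ?_
        rw [hUc i j (mem_filter.1 hj).2, hUc k l (mem_filter.1 hl).2,
          sum_bool_trace_adjPow_single]
    _ = ∑ i, ∑ j ∈ univ.filter (· ≤ i), (c i j : ℂ) ^ 2 * (G i j + G j i) := by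
        refine sum_congr rfl fun i _ => sum_congr rfl fun j _ => congrArg _ ?_
        rw [reindex fun k l => W i j k l + W j i k l]
        simp only [G, mul_add, sum_add_distrib]
    _ = ∑ p, ∑ q, (b p q : ℂ) ^ 2 * G p q := reindex G

theorem crossingTerm_nonneg {ι R : Type*} [Semiring R] [PartialOrder R] [IsOrderedRing R]
    {M₁ M₂ M₃ M₄ : Matrix ι ι R} (hM₁ : ∀ r s, 0 ≤ M₁ r s) (hM₂ : ∀ r s, 0 ≤ M₂ r s)
    (hM₃ : ∀ r s, 0 ≤ M₃ r s) (hM₄ : ∀ r s, 0 ≤ M₄ r s) (p q r s : ι) :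
    0 ≤ crossingTerm M₁ M₂ M₃ M₄ p q r s :=
  mul_nonneg (mul_nonneg (mul_nonneg (hM₁ q r) (hM₂ s q)) (hM₃ p s)) (hM₄ r p)

theorem sum_mul_sum_mul_le {ι R : Type*} [Fintype ι] [CommSemiring R] [PartialOrder R]
    [IsOrderedRing R] {w : ι → ι → R} {a : R} (hw0 : ∀ p q, 0 ≤ w p q) (hwa : ∀ p q, w p q ≤ a)
    {W : ι → ι → ι → ι → R} (hW : ∀ p q r s, 0 ≤ W p q r s) :
    ∑ p, ∑ q, w p q * ∑ r, ∑ s, w r s * W p q r s ≤ a ^ 2 * ∑ p, ∑ q, ∑ r, ∑ s, W p q r s := by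
  simp only [mul_sum]
  refine sum_le_sum fun p _ => sum_le_sum fun q _ => sum_le_sum fun r _ => sum_le_sum fun s _ => ?_
  calc w p q * (w r s * W p q r s) ≤ a * (a * W p q r s) :=
        mul_le_mul (hwa p q) (mul_le_mul_of_nonneg_right (hwa r s) (hW p q r s))
          (mul_nonneg (hw0 r s) (hW p q r s)) ((hw0 p q).trans (hwa p q))
    _ = a ^ 2 * W p q r s := by ring

theorem Complex.div_natCast_le_div_natCast {x y : ℂ} (h : x ≤ y) (n : ℕ) :
    x / n ≤ y / n := by
  rw [div_eq_mul_inv, div_eq_mul_inv, ← Complex.ofReal_natCast, ← Complex.ofReal_inv]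
  exact mul_le_mul_of_nonneg_right h (Complex.zero_le_real.2 (by positivity))

theorem crossing_inequality_hermitian_general
    (n : ℕ) (b : Fin n → Fin n → ℝ)
    (hb_nonneg : ∀ i j, 0 ≤ b i j) (hb_symm : ∀ i j, b i j = b j i)
    (σs : ℝ) (hσ1 : ∀ i j, b i j ≤ σs) (hσ2 : ∃ i j, b i j = σs)
    (U : Fin n → Fin n → Matrix (Fin n) (Fin n) ℂ)
    (hU : ∀ i j : Fin n, j < i → U i j = ((b i j : ℝ) : ℂ) • Matrix.single i j 1)
    (hUd : ∀ i : Fin n, U i i = ((b i i / Real.sqrt 2 : ℝ) : ℂ) • Matrix.single i i 1)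
    (M₁ M₂ M₃ M₄ : Matrix (Fin n) (Fin n) ℂ)
    (hM₁ : ∀ r s, 0 ≤ M₁ r s) (hM₂ : ∀ r s, 0 ≤ M₂ r s)
    (hM₃ : ∀ r s, 0 ≤ M₃ r s) (hM₄ : ∀ r s, 0 ≤ M₄ r s) :
    ((∑ i : Fin n, ∑ j ∈ Finset.univ.filter (· ≤ i),
        ∑ k : Fin n, ∑ l ∈ Finset.univ.filter (· ≤ k),
        ∑ e : Bool, ∑ d : Bool,
          Matrix.trace (adjPow (U i j) e * M₁ * adjPow (U k l) d * M₂ *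
            adjPow (U i j) (!e) * M₃ * adjPow (U k l) (!d) * M₄)) / (n : ℂ)
      ≤ ((σs : ℂ)) ^ 4 * (Matrix.trace (M₃ * M₂ * M₁ * M₄) / (n : ℂ)))
    ∧ ((∀ i j, b i j = 1) →
      (∑ i : Fin n, ∑ j ∈ Finset.univ.filter (· ≤ i),
        ∑ k : Fin n, ∑ l ∈ Finset.univ.filter (· ≤ k),
        ∑ e : Bool, ∑ d : Bool,
          Matrix.trace (adjPow (U i j) e * M₁ * adjPow (U k l) d * M₂ *
            adjPow (U i j) (!e) * M₃ * adjPow (U k l) (!d) * M₄)) / (n : ℂ)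
      = ((σs : ℂ)) ^ 4 * (Matrix.trace (M₃ * M₂ * M₁ * M₄) / (n : ℂ))) := by
  rw [sum_crossing_eq_sum_sq_mul_crossingTerm hb_symm hU hUd,
    trace_mul_mul_mul_eq_sum_crossingTerm, ← mul_div_assoc]
  refine ⟨Complex.div_natCast_le_div_natCast ?_ n, fun hb_one => ?_⟩
  · have hsq_nonneg : ∀ p q, (0 : ℂ) ≤ (b p q : ℂ) ^ 2 := fun p q => by
      exact_mod_cast sq_nonneg (b p q)
    have hsq_le : ∀ p q, (b p q : ℂ) ^ 2 ≤ (σs : ℂ) ^ 2 := fun p q => by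
      exact_mod_cast pow_le_pow_left₀ (hb_nonneg p q) (hσ1 p q) 2
    simpa only [← pow_mul] using
      sum_mul_sum_mul_le hsq_nonneg hsq_le (crossingTerm_nonneg hM₁ hM₂ hM₃ hM₄)
  · obtain ⟨i, j, rfl⟩ := hσ2
    simp [hb_one]

/-- Crossing inequality for Hermitian matrices with independent complex Gaussian entries:
for `U_{ij} = b_{ij} e_i e_j^*` (`i > j`), `U_{ii} = (b_{ii}/√2) e_i e_i^*` and any
matrices `M₁,…,M₄` with nonnegative entries,
`∑_{i≥j,k≥l} ∑_{ε,δ} tr (U_{ij}^ε M₁ U_{kl}^δ M₂ U_{ij}^{!ε} M₃ U_{kl}^{!δ} M₄)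
  ≤ σ_*^4 tr (M₃ M₂ M₁ M₄)`, with equality when all `b_{ij} = 1`. -/
theorem crossing_inequality_hermitian
    (n : ℕ) (hn : 1 ≤ n) (b : Fin n → Fin n → ℝ)
    (hb_nonneg : ∀ i j, 0 ≤ b i j) (hb_symm : ∀ i j, b i j = b j i)
    (σs : ℝ) (hσ1 : ∀ i j, b i j ≤ σs) (hσ2 : ∃ i j, b i j = σs)
    (U : Fin n → Fin n → Matrix (Fin n) (Fin n) ℂ)
    (hU : ∀ i j : Fin n, j < i → U i j = ((b i j : ℝ) : ℂ) • Matrix.single i j 1)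
    (hUd : ∀ i : Fin n, U i i = ((b i i / Real.sqrt 2 : ℝ) : ℂ) • Matrix.single i i 1)
    (M₁ M₂ M₃ M₄ : Matrix (Fin n) (Fin n) ℂ)
    (hM₁ : ∀ r s, 0 ≤ M₁ r s) (hM₂ : ∀ r s, 0 ≤ M₂ r s)
    (hM₃ : ∀ r s, 0 ≤ M₃ r s) (hM₄ : ∀ r s, 0 ≤ M₄ r s) :
    ((∑ i : Fin n, ∑ j ∈ Finset.univ.filter (· ≤ i),
        ∑ k : Fin n, ∑ l ∈ Finset.univ.filter (· ≤ k),
        ∑ e : Bool, ∑ d : Bool,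
          Matrix.trace (adjPow (U i j) e * M₁ * adjPow (U k l) d * M₂ *
            adjPow (U i j) (!e) * M₃ * adjPow (U k l) (!d) * M₄)) / (n : ℂ)
      ≤ ((σs : ℂ)) ^ 4 * (Matrix.trace (M₃ * M₂ * M₁ * M₄) / (n : ℂ)))
    ∧ ((∀ i j, b i j = 1) →
      (∑ i : Fin n, ∑ j ∈ Finset.univ.filter (· ≤ i),
        ∑ k : Fin n, ∑ l ∈ Finset.univ.filter (· ≤ k),
        ∑ e : Bool, ∑ d : Bool,
          Matrix.trace (adjPow (U i j) e * M₁ * adjPow (U k l) d * M₂ *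
            adjPow (U i j) (!e) * M₃ * adjPow (U k l) (!d) * M₄)) / (n : ℂ)
      = ((σs : ℂ)) ^ 4 * (Matrix.trace (M₃ * M₂ * M₁ * M₄) / (n : ℂ))) :=
  crossing_inequality_hermitian_general n b hb_nonneg hb_symm σs hσ1 hσ2 U hU hUd M₁ M₂ M₃ M₄ hM₁
    hM₂ hM₃ hM₄
end

section
/- Let E_{ij} = b_{ij} e_i e_j^* with 0 ≤ b_{ij} and σ_*^2 := max_{i,j} b_{ij}^2. For entrywise-nonnegative matrices M_1, M_2, M_3 of appropriate dimensions, the entrywise inequality ∑_{i,j,k,l} E_{ij} M_1 E_{kl}^* M_2 E_{ij} M_3 E_{kl}^* ≤_e σ_*^4 M_3 M_1^* M_2^* holds, with equality when b_{ij} = 1 for all i, j. -/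
/-! Each summand is a single matrix unit: `E_{ij} M₁ E_{kl}ᴴ M₂ E_{ij}ᴴ M₃ E_{kl}ᴴ` is
`b_{ij}² b_{kl}² M₃ i l M₁ j l M₂ k j` at position `(i, k)`. Hence the `(r, s)` entry of the sum
is the `(r, s)` entry of `M₃ M₁ᴴ M₂ᴴ`, written as a double sum over `j, l`, with each term
reweighted by `b_{rj}² b_{sl}² ≤ σ_*⁴`. -/

open Matrix

namespace Matrix

variable {ι κ R : Type*} [Fintype κ] [CommSemiring R] [StarRing R] [TrivialStar R]

theorem mul_conjTranspose_mul_conjTranspose_apply (M₁ : Matrix κ κ R) (M₂ M₃ : Matrix ι κ R)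
    (r s : ι) :
    (M₃ * M₁ᴴ * M₂ᴴ) r s = ∑ j, ∑ l, M₃ r l * M₁ j l * M₂ s j := by
  simp only [mul_apply, conjTranspose_apply, star_trivial, Finset.sum_mul]

variable [Fintype ι] [DecidableEq ι] [DecidableEq κ]

theorem single_crossing_product (i k : ι) (j l : κ) (a c : R)
    (M₁ : Matrix κ κ R) (M₂ M₃ : Matrix ι κ R) :
    single i j a * M₁ * (single k l c)ᴴ * M₂ * (single i j a)ᴴ * M₃ * (single k l c)ᴴ
      = single i k (a ^ 2 * c ^ 2 * (M₃ i l * M₁ j l * M₂ k j)) := by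
  -- regroup as `(single * M₁ * single) * M₂ * (single * M₃ * single)`; each sandwich collapses
  simp only [conjTranspose_eq_transpose_of_trivial, transpose_single, Matrix.mul_assoc]
  simp only [← Matrix.mul_assoc, single_mul_mul_single]
  congr 1
  ring

theorem sum_single_crossing_product_apply (b : ι → κ → R)
    (M₁ : Matrix κ κ R) (M₂ M₃ : Matrix ι κ R) (r s : ι) :
    (∑ i, ∑ k, ∑ j, ∑ l, single i j (b i j) * M₁ * (single k l (b k l))ᴴ * M₂ *
        (single i j (b i j))ᴴ * M₃ * (single k l (b k l))ᴴ) r s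
      = ∑ j, ∑ l, b r j ^ 2 * b s l ^ 2 * (M₃ r l * M₁ j l * M₂ s j) := by
  simp only [single_crossing_product, sum_apply, single_apply, ite_and]
  simp only [Finset.sum_ite_eq', Finset.sum_ite_irrel, Finset.sum_const_zero, Finset.mem_univ,
    if_true]

end Matrix

theorem crossing_inequality_rectangular_general
    (n m : ℕ)
    (b : Fin n → Fin m → ℝ) (hb_nonneg : ∀ i j, 0 ≤ b i j)
    (σs : ℝ) (hσ1 : ∀ i j, b i j ≤ σs) (hσ2 : ∃ i j, b i j = σs)
    (E : Fin n → Fin m → Matrix (Fin n) (Fin m) ℝ)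
    (hE : ∀ i j, E i j = b i j • single i j 1)
    (M₁ : Matrix (Fin m) (Fin m) ℝ) (M₂ M₃ : Matrix (Fin n) (Fin m) ℝ)
    (hM₁ : ∀ r s, 0 ≤ M₁ r s) (hM₂ : ∀ r s, 0 ≤ M₂ r s) (hM₃ : ∀ r s, 0 ≤ M₃ r s) :
    (∀ r s : Fin n,
      (∑ i : Fin n, ∑ k : Fin n, ∑ j : Fin m, ∑ l : Fin m,
          E i j * M₁ * (E k l)ᴴ * M₂ * (E i j)ᴴ * M₃ * (E k l)ᴴ) r s
        ≤ (σs ^ 4 • (M₃ * M₁ᴴ * M₂ᴴ)) r s)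
    ∧ ((∀ i j, b i j = 1) →
      (∑ i : Fin n, ∑ k : Fin n, ∑ j : Fin m, ∑ l : Fin m,
          E i j * M₁ * (E k l)ᴴ * M₂ * (E i j)ᴴ * M₃ * (E k l)ᴴ)
        = σs ^ 4 • (M₃ * M₁ᴴ * M₂ᴴ)) := by
  obtain rfl : E = fun i j => single i j (b i j) :=
    funext₂ fun i j => by rw [hE, smul_single, smul_eq_mul, mul_one]
  refine ⟨fun r s => ?_, fun hb1 => ?_⟩
  · rw [sum_single_crossing_product_apply, Matrix.smul_apply,
      mul_conjTranspose_mul_conjTranspose_apply, smul_eq_mul]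
    simp only [Finset.mul_sum]
    refine Finset.sum_le_sum fun j _ => Finset.sum_le_sum fun l _ => ?_
    calc b r j ^ 2 * b s l ^ 2 * (M₃ r l * M₁ j l * M₂ s j)
        ≤ σs ^ 2 * σs ^ 2 * (M₃ r l * M₁ j l * M₂ s j) := by
          have hM : 0 ≤ M₃ r l * M₁ j l * M₂ s j :=
            mul_nonneg (mul_nonneg (hM₃ r l) (hM₁ j l)) (hM₂ s j)
          gcongr
          exacts [hb_nonneg r j, hσ1 r j, hb_nonneg s l, hσ1 s l]
      _ = σs ^ 4 * (M₃ r l * M₁ j l * M₂ s j) := by ring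
  · obtain rfl : σs = 1 := by obtain ⟨i, j, h⟩ := hσ2; rw [← h, hb1]
    ext r s
    rw [sum_single_crossing_product_apply, one_pow, one_smul,
      mul_conjTranspose_mul_conjTranspose_apply]
    simp only [hb1, one_pow, one_mul]

/-- Crossing inequality in the rectangular case (pattern `ε = (1,*,*,*)`, for which
Lemma 4.7(c) gives the right-hand side `M₃ M₁^* M₂^*`):
for `E_{ij} = b_{ij} e_i e_j^*` and entrywise-nonnegative matrices `M₁, M₂, M₃`,
`∑_{i,j,k,l} E_{ij} M₁ E_{kl}^* M₂ E_{ij}^* M₃ E_{kl}^* ≤_e σ_*^4 M₃ M₁^* M₂^*`,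
with equality when all `b_{ij} = 1`. -/
theorem crossing_inequality_rectangular
    (n m : ℕ) (hn : 1 ≤ n) (hm : 1 ≤ m)
    (b : Fin n → Fin m → ℝ) (hb_nonneg : ∀ i j, 0 ≤ b i j)
    (σs : ℝ) (hσ1 : ∀ i j, b i j ≤ σs) (hσ2 : ∃ i j, b i j = σs)
    (E : Fin n → Fin m → Matrix (Fin n) (Fin m) ℝ)
    (hE : ∀ i j, E i j = b i j • single i j 1)
    (M₁ : Matrix (Fin m) (Fin m) ℝ) (M₂ M₃ : Matrix (Fin n) (Fin m) ℝ)
    (hM₁ : ∀ r s, 0 ≤ M₁ r s) (hM₂ : ∀ r s, 0 ≤ M₂ r s) (hM₃ : ∀ r s, 0 ≤ M₃ r s) :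
    (∀ r s : Fin n,
      (∑ i : Fin n, ∑ k : Fin n, ∑ j : Fin m, ∑ l : Fin m,
          E i j * M₁ * (E k l)ᴴ * M₂ * (E i j)ᴴ * M₃ * (E k l)ᴴ) r s
        ≤ (σs ^ 4 • (M₃ * M₁ᴴ * M₂ᴴ)) r s)
    ∧ ((∀ i j, b i j = 1) →
      (∑ i : Fin n, ∑ k : Fin n, ∑ j : Fin m, ∑ l : Fin m,
          E i j * M₁ * (E k l)ᴴ * M₂ * (E i j)ᴴ * M₃ * (E k l)ᴴ)
        = σs ^ 4 • (M₃ * M₁ᴴ * M₂ᴴ)) :=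
  crossing_inequality_rectangular_general n m b hb_nonneg σs hσ1 hσ2 E hE M₁ M₂ M₃ hM₁ hM₂ hM₃
end

section
/- Fix c ≥ 1, n ≥ 1, and p ∈ N with 1 ≤ p < (c-1)n. Let λ := c + 1 + √(4c + p²/n²) and λ̄ := c + 1 - √(4c + p²/n²). Suppose a sequence (K_k)_{1≤k≤p} of positive reals satisfies K_1 = 2(c+1) and K_k ≤ λ + λ̄ - (1 - 3/(4k²-1)) λλ̄ / K_{k-1} for 2 ≤ k ≤ p. Then K_k ≤ (1 + 2√c/k²) λ for all 1 ≤ k ≤ p. -/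
/-!
Induction on `k`, with `a_k = 1 + 2√c/k²` and `ε_k = 3/(4k² - 1)`. Feeding
`K_{k-1} ≤ a_{k-1} λ` into the recursion gives `K_k ≤ λ + λ̄ (a_{k-1} - 1 + ε_k) / a_{k-1}`,
so it suffices that `λ̄ (a_{k-1} - 1 + ε_k) ≤ (a_k - 1) a_{k-1} λ`. This follows from
`4 λ̄ ≤ √c (λ - λ̄)` (as `λ - λ̄ = 2√(4c + p²/n²) ≥ 4√c` and `λ̄ ≤ c`) together with
`4k² - 1 ≥ 4k(k - 1)`, which reduces it to a polynomial inequality in `√c` and `k`.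
-/

lemma ratio_recursion_coeff_le {u m : ℝ} (hu : 0 < u) (hm : 1 ≤ m) :
    (2 * u / m ^ 2 + 3 / (4 * (m + 1) ^ 2 - 1)) * (m + 1) ^ 2
      ≤ 2 * (u + 4) * (1 + 2 * u / m ^ 2) := by
  have hm0 : 0 < m := by linarith
  calc (2 * u / m ^ 2 + 3 / (4 * (m + 1) ^ 2 - 1)) * (m + 1) ^ 2
      ≤ (2 * u / m ^ 2 + 3 / (4 * m * (m + 1))) * (m + 1) ^ 2 := by
        gcongr; nlinarith
    _ ≤ 2 * (u + 4) * (1 + 2 * u / m ^ 2) := by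
        rw [div_add_div _ _ (by positivity) (by positivity), div_mul_eq_mul_div,
          div_le_iff₀ (by positivity)]
        field_simp
        nlinarith [sq_nonneg (u - m), mul_pos hu hm0, mul_pos (mul_pos hu hm0) hm0]

lemma ratio_recursion_step {u lam lamb m x : ℝ} (hu : 0 < u) (hlamb : 0 ≤ lamb)
    (hgap : 4 * lamb ≤ u * (lam - lamb)) (hm : 1 ≤ m) (hx : 0 < x)
    (hxle : x ≤ (1 + 2 * u / m ^ 2) * lam) :
    lam + lamb - (1 - 3 / (4 * (m + 1) ^ 2 - 1)) * (lam * lamb) / x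
      ≤ (1 + 2 * u / (m + 1) ^ 2) * lam := by
  have hcoef := ratio_recursion_coeff_le hu hm
  set a := 1 + 2 * u / m ^ 2
  set ε := 3 / (4 * (m + 1) ^ 2 - 1)
  have ha : 0 < a := by positivity
  have hε : ε ≤ 1 := by
    rw [div_le_one (by nlinarith)]; nlinarith
  have hlam : 0 < lam := pos_of_mul_pos_right (hx.trans_le hxle) ha.le
  have hcross : lamb * (a - 1 + ε) * (m + 1) ^ 2 ≤ 2 * u * lam * a := by
    rw [show a - 1 = 2 * u / m ^ 2 by ring]
    nlinarith [mul_le_mul_of_nonneg_left hcoef hlamb]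
  calc lam + lamb - (1 - ε) * (lam * lamb) / x
      ≤ lam + lamb - (1 - ε) * (lam * lamb) / (a * lam) := by
        gcongr
    _ = lam + lamb * (a - 1 + ε) / a := by field_simp; ring
    _ ≤ (1 + 2 * u / (m + 1) ^ 2) * lam := by
        have : lamb * (a - 1 + ε) / a ≤ 2 * u / (m + 1) ^ 2 * lam := by
          rw [div_le_iff₀ ha, div_mul_eq_mul_div, div_mul_eq_mul_div, le_div_iff₀ (by positivity)]
          linarith
        linarith

theorem ratio_recursion_le {u lam lamb : ℝ} (hu : 0 < u) (hlamb : 0 ≤ lamb)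
    (hgap : 4 * lamb ≤ u * (lam - lamb)) {p : ℕ} {K : ℕ → ℝ}
    (hpos : ∀ k, 1 ≤ k → k ≤ p → 0 < K k) (h1 : K 1 = lam + lamb)
    (hrec : ∀ k, 2 ≤ k → k ≤ p →
      K k ≤ lam + lamb - (1 - 3 / (4 * (k : ℝ) ^ 2 - 1)) * (lam * lamb) / K (k - 1)) :
    ∀ k, 1 ≤ k → k ≤ p → K k ≤ (1 + 2 * u / (k : ℝ) ^ 2) * lam := by
  intro k hk
  induction k, hk using Nat.le_induction with
  | base =>
    intro _
    rw [h1]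
    nlinarith
  | succ k hk ih =>
    intro hkp
    have hstep := ratio_recursion_step hu hlamb hgap (Nat.one_le_cast.mpr hk)
      (hpos k hk (by omega)) (ih (by omega))
    have hr := hrec (k + 1) (by omega) hkp
    push_cast at hr ⊢
    simpa using hr.trans hstep

lemma sqrt_four_mul_add_sq_le {c q : ℝ} (hq : 0 ≤ q) (hqc : q ≤ c - 1) :
    √(4 * c + q ^ 2) ≤ c + 1 :=
  Real.sqrt_le_iff.mpr ⟨by linarith, by nlinarith⟩

lemma two_mul_sqrt_le_sqrt_four_mul_add_sq {c : ℝ} (hc : 0 ≤ c) (q : ℝ) :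
    2 * √c ≤ √(4 * c + q ^ 2) :=
  Real.le_sqrt_of_sq_le (by nlinarith [Real.sq_sqrt hc])

theorem wishart_ratio_bound_large_k_general
    (c : ℝ) (n : ℕ) (p : ℕ)
    (hpc : (p : ℝ) < (c - 1) * n)
    (K : ℕ → ℝ) (hKpos : ∀ k, 1 ≤ k → k ≤ p → 0 < K k)
    (hK1 : K 1 = 2 * (c + 1))
    (hrec : ∀ k, 2 ≤ k → k ≤ p →
      K k ≤ (c + 1 + Real.sqrt (4 * c + (p : ℝ) ^ 2 / (n : ℝ) ^ 2))
            + (c + 1 - Real.sqrt (4 * c + (p : ℝ) ^ 2 / (n : ℝ) ^ 2))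
            - (1 - 3 / (4 * (k : ℝ) ^ 2 - 1)) *
              ((c + 1 + Real.sqrt (4 * c + (p : ℝ) ^ 2 / (n : ℝ) ^ 2)) *
               (c + 1 - Real.sqrt (4 * c + (p : ℝ) ^ 2 / (n : ℝ) ^ 2))) / K (k - 1)) :
    ∀ k, 1 ≤ k → k ≤ p →
      K k ≤ (1 + 2 * Real.sqrt c / (k : ℝ) ^ 2) *
        (c + 1 + Real.sqrt (4 * c + (p : ℝ) ^ 2 / (n : ℝ) ^ 2)) := by
  have hprod : 0 < (c - 1) * n := (Nat.cast_nonneg p).trans_lt hpc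
  have hc : 0 < c - 1 := pos_of_mul_pos_left hprod (Nat.cast_nonneg n)
  have hn : (0 : ℝ) < n := pos_of_mul_pos_right hprod hc.le
  have hqc : (p / n : ℝ) < c - 1 := (div_lt_iff₀ hn).2 hpc
  rw [← div_pow] at hrec ⊢
  set s := √(4 * c + (p / n : ℝ) ^ 2)
  have hs_le : s ≤ c + 1 := sqrt_four_mul_add_sq_le (by positivity) hqc.le
  have hs_ge : 2 * √c ≤ s := two_mul_sqrt_le_sqrt_four_mul_add_sq (by linarith) _
  have hu : 1 ≤ √c := Real.one_le_sqrt.mpr (by linarith)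
  have hgap : 4 * (c + 1 - s) ≤ √c * ((c + 1 + s) - (c + 1 - s)) := by
    nlinarith [Real.sq_sqrt (by linarith : (0 : ℝ) ≤ c)]
  exact ratio_recursion_le (by positivity) (by linarith) hgap hKpos
    (by rw [hK1]; ring) hrec

/-- First bound on the complex Wishart moment ratios: if `1 ≤ p < (c-1)n`,
`λ = c+1+√(4c+p²/n²)`, `λ̄ = c+1-√(4c+p²/n²)`, `K_1 = 2(c+1)` and
`K_k ≤ λ + λ̄ - (1 - 3/(4k²-1)) λλ̄ / K_{k-1}` for `2 ≤ k ≤ p`, then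
`K_k ≤ (1 + 2√c/k²) λ` for all `1 ≤ k ≤ p`. -/
theorem wishart_ratio_bound_large_k
    (c : ℝ) (hc : 1 ≤ c) (n : ℕ) (hn : 1 ≤ n) (p : ℕ) (hp : 1 ≤ p)
    (hpc : (p : ℝ) < (c - 1) * n)
    (K : ℕ → ℝ) (hKpos : ∀ k, 1 ≤ k → k ≤ p → 0 < K k)
    (hK1 : K 1 = 2 * (c + 1))
    (hrec : ∀ k, 2 ≤ k → k ≤ p →
      K k ≤ (c + 1 + Real.sqrt (4 * c + (p : ℝ) ^ 2 / (n : ℝ) ^ 2))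
            + (c + 1 - Real.sqrt (4 * c + (p : ℝ) ^ 2 / (n : ℝ) ^ 2))
            - (1 - 3 / (4 * (k : ℝ) ^ 2 - 1)) *
              ((c + 1 + Real.sqrt (4 * c + (p : ℝ) ^ 2 / (n : ℝ) ^ 2)) *
               (c + 1 - Real.sqrt (4 * c + (p : ℝ) ^ 2 / (n : ℝ) ^ 2))) / K (k - 1)) :
    ∀ k, 1 ≤ k → k ≤ p →
      K k ≤ (1 + 2 * Real.sqrt c / (k : ℝ) ^ 2) *
        (c + 1 + Real.sqrt (4 * c + (p : ℝ) ^ 2 / (n : ℝ) ^ 2)) :=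
  wishart_ratio_bound_large_k_general c n p hpc K hKpos hK1 hrec
end

section
/- Fix c ≥ 1, n ≥ 1, and p ∈ N with 1 ≤ p < (c-1)n. Let λ := c + 1 + √(4c + p²/n²) and λ̄ := c + 1 - √(4c + p²/n²). Suppose a sequence (K_k)_{1≤k≤p} of positive reals satisfies K_1 = 2(c+1) and K_k ≤ λ + λ̄ - (1 - 3/(4k²-1)) λλ̄ / K_{k-1} for 2 ≤ k ≤ p. Then K_k ≤ (1 + 3/(2k)) λ for all 1 ≤ k ≤ p. -/
set_option maxHeartbeats 1000000



private lemma wishart_aux (l lb m : ℝ) (hl : 0 < l) (hlb : 0 < lb) (hle : lb ≤ l)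
    (hm1 : 1 ≤ m) :
    l + lb - (1 - 3 / (4 * (m + 1) ^ 2 - 1)) * (l * lb) / ((1 + 3 / (2 * m)) * l) ≤
      (1 + 3 / (2 * (m + 1))) * l := by
  have hm0 : (0:ℝ) < m := by linarith
  have hd1 : (0:ℝ) < 4 * (m + 1) ^ 2 - 1 := by nlinarith
  have hq : (0:ℝ) < 1 + 3 / (2 * m) := by positivity
  have hrw : (1 - 3 / (4 * (m + 1) ^ 2 - 1)) * (l * lb) / ((1 + 3 / (2 * m)) * l) =
      ((1 - 3 / (4 * (m + 1) ^ 2 - 1)) / (1 + 3 / (2 * m))) * lb := by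
    field_simp
  rw [hrw]
  set t : ℝ := 1 - (1 - 3 / (4 * (m + 1) ^ 2 - 1)) / (1 + 3 / (2 * m)) with ht
  have ht0 : 0 ≤ t := by
    rw [ht, sub_nonneg, div_le_one hq]
    have h2 : 0 ≤ 3 / (2 * m) := by positivity
    have h3 : 0 ≤ 3 / (4 * (m + 1) ^ 2 - 1) := by positivity
    linarith
  have ht2 : t ≤ 3 / (2 * (m + 1)) := by
    rw [ht, sub_le_comm, le_div_iff₀ hq, ← sub_nonneg]
    have e : 1 - 3 / (4 * (m + 1) ^ 2 - 1) - (1 - 3 / (2 * (m + 1))) * (1 + 3 / (2 * m)) =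
        (12 * m + 9) / ((4 * (m + 1) ^ 2 - 1) * (2 * (m + 1)) * (2 * m)) := by
      field_simp
      ring
    rw [e]
    positivity
  have hfin : t * lb ≤ (3 / (2 * (m + 1))) * l :=
    le_trans (mul_le_mul_of_nonneg_left hle ht0) (mul_le_mul_of_nonneg_right ht2 hl.le)
  have e3 : ((1 - 3 / (4 * (m + 1) ^ 2 - 1)) / (1 + 3 / (2 * m))) * lb = lb - t * lb := by
    rw [ht]; ring
  have e4 : (1 + 3 / (2 * (m + 1))) * l = l + (3 / (2 * (m + 1))) * l := by ring
  rw [e3, e4]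
  linarith

/-- First bound on the complex Wishart moment ratios: if `1 ≤ p < (c-1)n`,
`λ = c+1+√(4c+p²/n²)`, `λ̄ = c+1-√(4c+p²/n²)`, `K_1 = 2(c+1)` and
`K_k ≤ λ + λ̄ - (1 - 3/(4k²-1)) λλ̄ / K_{k-1}` for `2 ≤ k ≤ p`, then
`K_k ≤ (1 + 3/(2k)) λ` for all `1 ≤ k ≤ p`. -/
theorem wishart_ratio_bound_small_k
    (c : ℝ) (hc : 1 ≤ c) (n : ℕ) (hn : 1 ≤ n) (p : ℕ) (hp : 1 ≤ p)
    (hpc : (p : ℝ) < (c - 1) * n)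
    (K : ℕ → ℝ) (hKpos : ∀ k, 1 ≤ k → k ≤ p → 0 < K k)
    (hK1 : K 1 = 2 * (c + 1))
    (hrec : ∀ k, 2 ≤ k → k ≤ p →
      K k ≤ (c + 1 + Real.sqrt (4 * c + (p : ℝ) ^ 2 / (n : ℝ) ^ 2))
            + (c + 1 - Real.sqrt (4 * c + (p : ℝ) ^ 2 / (n : ℝ) ^ 2))
            - (1 - 3 / (4 * (k : ℝ) ^ 2 - 1)) *
              ((c + 1 + Real.sqrt (4 * c + (p : ℝ) ^ 2 / (n : ℝ) ^ 2)) *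
               (c + 1 - Real.sqrt (4 * c + (p : ℝ) ^ 2 / (n : ℝ) ^ 2))) / K (k - 1)) :
    ∀ k, 1 ≤ k → k ≤ p →
      K k ≤ (1 + 3 / (2 * (k : ℝ))) *
        (c + 1 + Real.sqrt (4 * c + (p : ℝ) ^ 2 / (n : ℝ) ^ 2)) := by
  set s : ℝ := Real.sqrt (4 * c + (p : ℝ) ^ 2 / (n : ℝ) ^ 2) with hs
  have hn0 : (0:ℝ) < (n:ℝ) := by exact_mod_cast hn
  have hp0 : (0:ℝ) ≤ (p:ℝ) := by positivity
  have harg : (0:ℝ) ≤ 4 * c + (p : ℝ) ^ 2 / (n : ℝ) ^ 2 := by positivity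
  have hs0 : 0 ≤ s := Real.sqrt_nonneg _
  have hs2 : s ^ 2 = 4 * c + (p : ℝ) ^ 2 / (n : ℝ) ^ 2 := Real.sq_sqrt harg
  have hl : 0 < c + 1 + s := by linarith
  -- λλ̄ > 0
  have hpn : (p : ℝ) ^ 2 / (n : ℝ) ^ 2 < (c - 1) ^ 2 := by
    rw [div_lt_iff₀ (by positivity)]
    have hc1 : 0 < c - 1 := by nlinarith
    nlinarith [mul_pos hc1 hn0]
  have hll : 0 < (c + 1 + s) * (c + 1 - s) := by nlinarith
  have hlb : 0 < c + 1 - s := by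
    by_contra h
    push_neg at h
    nlinarith
  have hle : c + 1 - s ≤ c + 1 + s := by linarith
  clear_value s
  intro k hk1
  induction k, hk1 using Nat.le_induction with
  | base =>
    intro hkp
    rw [hK1]
    push_cast
    nlinarith
  | succ k hk ih =>
    intro hkp
    have hkp' : k ≤ p := le_trans (Nat.le_succ k) hkp
    have ihk := ih hkp'
    have hKk : 0 < K k := hKpos k hk hkp'
    have hrek := hrec (k + 1) (by omega) hkp
    simp only [Nat.add_sub_cancel] at hrek
    set m : ℝ := (k : ℝ) with hm
    have hm1 : 1 ≤ m := by rw [hm]; exact_mod_cast hk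
    clear_value m
    have hm0 : (0:ℝ) < m := by linarith
    push_cast at hrek ⊢
    rw [← hm] at hrek ⊢
    have hd1 : (0:ℝ) < 4 * (m + 1) ^ 2 - 1 := by nlinarith
    have hcoef : 0 < 1 - 3 / (4 * (m + 1) ^ 2 - 1) := by
      rw [sub_pos, div_lt_one hd1]; nlinarith
    have hub : 0 < (1 + 3 / (2 * m)) * (c + 1 + s) := by positivity
    have h1 : (1 - 3 / (4 * (m + 1) ^ 2 - 1)) * ((c + 1 + s) * (c + 1 - s)) /
        ((1 + 3 / (2 * m)) * (c + 1 + s)) ≤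
        (1 - 3 / (4 * (m + 1) ^ 2 - 1)) * ((c + 1 + s) * (c + 1 - s)) / K k := by
      apply div_le_div_of_nonneg_left (mul_pos hcoef hll).le hKk ihk
    -- final elementary inequality
    have key : (c + 1 + s) + (c + 1 - s) -
        (1 - 3 / (4 * (m + 1) ^ 2 - 1)) * ((c + 1 + s) * (c + 1 - s)) /
          ((1 + 3 / (2 * m)) * (c + 1 + s)) ≤
        (1 + 3 / (2 * (m + 1))) * (c + 1 + s) :=
      wishart_aux (c + 1 + s) (c + 1 - s) m hl hlb hle hm1
    linarith [hrek, h1, key]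
end

section
/- Let c ≥ 1, n ≥ 1, and p ≥ (c-1)n with p ≥ 1. Define χ_k = C_k/4^k (scaled Catalan numbers) and suppose a positive sequence (A_k)_{0≤k≤p} satisfies A_0 = 1, A_1 = c, and the recursion A_{k+1} = 2(c+1)·((2k+1)/(2k+4))·A_k - ((c-1)² - k²/n²)·((k-1)/(k+2))·A_{k-1} for 1 ≤ k ≤ p-1. Then N_k := A_k/χ_k satisfies N_k ≤ 4(√c+1)^{2k}(1 + 2p²/(c²n²))^k for all 1 ≤ k ≤ p. -/
/-!
Write `N_k = A_k / χ_k`. Since `χ_{k+1} = (2k+1)/(2k+4) χ_k`, dividing the recursion by `χ_{k+1}`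
gives `N_{k+1} = 2(c+1) N_k - ((c-1)² - k²/n²) r_k N_{k-1}` with
`r_k = (k-1)/(k+2) · χ_{k-1}/χ_{k+1} = (4k²-4)/(4k²-1) ∈ [0, 1)`. As `A > 0` and `k ≤ p`, this yields
`N_{k+1} ≤ E N_k + q N_{k-1}` with `q = p²/n²` and `E = (√c+1)² + q/c ≥ 2(c+1)`, the last inequality
being where `p ≥ (c-1)n` enters. Such a two-step inequality propagates `N_k ≤ 4 x^k` from `N_0 = 1`
and `N_1 = 4c` as soon as `x² ≥ E x + q`, which holds for `x = (√c+1)² (1 + 2q/c²)`.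
-/

theorem add_two_mul_catalan_succ (k : ℕ) :
    (k + 2) * catalan (k + 1) = 2 * (2 * k + 1) * catalan k := by
  refine Nat.eq_of_mul_eq_mul_left k.succ_pos ?_
  calc (k + 1) * ((k + 2) * catalan (k + 1))
      = (k + 1) * (k + 1).centralBinom := by rw [← succ_mul_catalan_eq_centralBinom (k + 1)]
    _ = 2 * (2 * k + 1) * k.centralBinom := Nat.succ_mul_centralBinom_succ k
    _ = (k + 1) * (2 * (2 * k + 1) * catalan k) := by
      rw [← succ_mul_catalan_eq_centralBinom k]; ring

theorem catalan_pos (k : ℕ) : 0 < catalan k :=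
  Nat.pos_of_mul_pos_left ((succ_mul_catalan_eq_centralBinom k).symm ▸ k.centralBinom_pos)

noncomputable def scaledCatalan (k : ℕ) : ℝ := catalan k / 4 ^ k

theorem scaledCatalan_pos (k : ℕ) : 0 < scaledCatalan k := by
  have := catalan_pos k
  unfold scaledCatalan
  positivity

theorem scaledCatalan_succ (k : ℕ) :
    scaledCatalan (k + 1) = (2 * k + 1) / (2 * k + 4) * scaledCatalan k := by
  have h : ((k : ℝ) + 2) * catalan (k + 1) = 2 * (2 * k + 1) * catalan k := by
    exact_mod_cast add_two_mul_catalan_succ k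
  unfold scaledCatalan
  field_simp
  rw [pow_succ]
  linear_combination 4 ^ k * 2 * h

theorem sub_one_div_mul_scaledCatalan_le {k : ℕ} (hk : 1 ≤ k) :
    ((k : ℝ) - 1) / (k + 2) * scaledCatalan (k - 1) ≤ scaledCatalan (k + 1) := by
  obtain ⟨m, rfl⟩ := Nat.exists_eq_add_of_le' hk
  rw [Nat.add_sub_cancel, scaledCatalan_succ (m + 1), scaledCatalan_succ m, ← mul_assoc]
  gcongr
  · exact (scaledCatalan_pos m).le
  · push_cast
    rw [div_mul_div_comm, div_le_div_iff₀ (by positivity) (by positivity)]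
    nlinarith

theorem div_scaledCatalan_le {k : ℕ} (hk : 1 ≤ k) {b d q u v : ℝ} (hq : 0 ≤ q) (hdq : -d ≤ q)
    (hv : 0 ≤ v) :
    (b * ((2 * k + 1) / (2 * k + 4)) * u - d * (((k : ℝ) - 1) / (k + 2)) * v) /
        scaledCatalan (k + 1)
      ≤ b * (u / scaledCatalan k) + q * (v / scaledCatalan (k - 1)) := by
  set r : ℝ := ((k : ℝ) - 1) / (k + 2)
  have hr : 0 ≤ r := div_nonneg (by simp [hk]) (by positivity)
  have hχ := scaledCatalan_pos (k - 1)
  have hχ' := scaledCatalan_pos (k + 1)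
  have hfirst : b * ((2 * k + 1) / (2 * k + 4)) * u / scaledCatalan (k + 1)
      = b * (u / scaledCatalan k) := by
    have := scaledCatalan_pos k
    rw [scaledCatalan_succ]
    field_simp
  have hsecond : -d * r * v / scaledCatalan (k + 1) ≤ q * (v / scaledCatalan (k - 1)) :=
    calc -d * r * v / scaledCatalan (k + 1)
        ≤ q * r * v / scaledCatalan (k + 1) := by
          gcongr
      _ = q * v * (r / scaledCatalan (k + 1)) := by ring
      _ ≤ q * v * (1 / scaledCatalan (k - 1)) := by
          refine mul_le_mul_of_nonneg_left ?_ (mul_nonneg hq hv)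
          rw [div_le_div_iff₀ hχ' hχ]
          simpa using sub_one_div_mul_scaledCatalan_le hk
      _ = q * (v / scaledCatalan (k - 1)) := by ring
  calc _ = b * ((2 * k + 1) / (2 * k + 4)) * u / scaledCatalan (k + 1)
        + -d * r * v / scaledCatalan (k + 1) := by ring
    _ ≤ _ := by rw [hfirst]; gcongr

theorem le_mul_pow_of_le_two_step {N : ℕ → ℝ} {C x E q : ℝ} {p : ℕ} (hC : 0 ≤ C) (hx : 0 ≤ x)
    (hE : 0 ≤ E) (hq : 0 ≤ q) (hroot : E * x + q ≤ x ^ 2) (h₀ : N 0 ≤ C) (h₁ : N 1 ≤ C * x)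
    (hstep : ∀ k, k + 2 ≤ p → N (k + 2) ≤ E * N (k + 1) + q * N k) :
    ∀ k ≤ p, N k ≤ C * x ^ k := by
  intro k
  induction k using Nat.twoStepInduction with
  | zero => simpa using h₀
  | one => exact fun _ => by simpa using h₁
  | more k ih₀ ih₁ =>
    intro hk
    calc N (k + 2) ≤ E * N (k + 1) + q * N k := hstep k hk
      _ ≤ E * (C * x ^ (k + 1)) + q * (C * x ^ k) := by
          gcongr
          exacts [ih₁ (by omega), ih₀ (by omega)]
      _ = C * x ^ k * (E * x + q) := by ring
      _ ≤ C * x ^ k * x ^ 2 := by gcongr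
      _ = C * x ^ (k + 2) := by ring

theorem sub_one_sq_le_div_sq {c x y : ℝ} (hc : 1 ≤ c) (hy : 0 < y) (h : (c - 1) * y ≤ x) :
    (c - 1) ^ 2 ≤ x ^ 2 / y ^ 2 := by
  rw [le_div_iff₀ (by positivity), ← mul_pow]
  exact pow_le_pow_left₀ (mul_nonneg (by linarith) hy.le) h 2

theorem le_sqrt_add_one_sq {c : ℝ} (hc : 0 ≤ c) : c ≤ (√c + 1) ^ 2 := by
  nlinarith [Real.sq_sqrt hc, Real.sqrt_nonneg c]

theorem two_mul_add_one_le_sqrt_add_one_sq_add_div {c q : ℝ} (hc : 0 < c)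
    (hq : (c - 1) ^ 2 ≤ q) : 2 * (c + 1) ≤ (√c + 1) ^ 2 + q / c := by
  have hs := Real.sq_sqrt hc.le
  have : c * (√c - 1) ^ 2 ≤ q :=
    calc c * (√c - 1) ^ 2 ≤ (√c + 1) ^ 2 * (√c - 1) ^ 2 := by
          gcongr; nlinarith [Real.sqrt_nonneg c]
      _ = (c - 1) ^ 2 := by rw [← mul_pow, show (√c + 1) * (√c - 1) = √c ^ 2 - 1 by ring, hs]
      _ ≤ q := hq
  rw [← le_div_iff₀' hc] at this
  nlinarith

theorem add_div_mul_add_le_sq {a c q : ℝ} (hc : 0 < c) (hca : c ≤ a) (hq : 0 ≤ q) :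
    (a + q / c) * (a * (1 + 2 * q / c ^ 2)) + q ≤ (a * (1 + 2 * q / c ^ 2)) ^ 2 := by
  have ha : 0 < a := hc.trans_le hca
  have ht : 1 ≤ 1 + 2 * q / c ^ 2 := by simp; positivity
  have key : c ^ 2 ≤ a * (1 + 2 * q / c ^ 2) * (2 * a - c) := by
    calc c ^ 2 = c * 1 * c := by ring
      _ ≤ a * (1 + 2 * q / c ^ 2) * (2 * a - c) := by gcongr; linarith
  have : (a * (1 + 2 * q / c ^ 2)) ^ 2 - ((a + q / c) * (a * (1 + 2 * q / c ^ 2)) + q)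
      = q / c ^ 2 * (a * (1 + 2 * q / c ^ 2) * (2 * a - c) - c ^ 2) := by
    field_simp; ring
  nlinarith [mul_nonneg (div_nonneg hq (sq_nonneg c)) (sub_nonneg.2 key)]

theorem wishart_moment_bound_large_p_general
    (c : ℝ) (hc : 1 ≤ c) (n : ℕ) (hn : 1 ≤ n) (p : ℕ)
    (hpc : (c - 1) * n ≤ (p : ℝ))
    (A : ℕ → ℝ) (hApos : ∀ k, k ≤ p → 0 < A k)
    (hA0 : A 0 = 1) (hA1 : A 1 = c)
    (hrec : ∀ k, 1 ≤ k → k ≤ p - 1 →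
      A (k + 1) = 2 * (c + 1) * ((2 * (k : ℝ) + 1) / (2 * (k : ℝ) + 4)) * A k
        - ((c - 1) ^ 2 - (k : ℝ) ^ 2 / (n : ℝ) ^ 2) *
            (((k : ℝ) - 1) / ((k : ℝ) + 2)) * A (k - 1)) :
    ∀ k, 1 ≤ k → k ≤ p →
      A k / ((catalan k : ℝ) / 4 ^ k)
        ≤ 4 * (Real.sqrt c + 1) ^ (2 * k) *
            (1 + 2 * (p : ℝ) ^ 2 / (c ^ 2 * (n : ℝ) ^ 2)) ^ k := by
  have hc0 : 0 < c := by linarith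
  have hn0 : (0 : ℝ) < n := by exact_mod_cast hn
  set q : ℝ := (p : ℝ) ^ 2 / (n : ℝ) ^ 2 with hq_def
  have hq : 0 ≤ q := by positivity
  have hcq : (c - 1) ^ 2 ≤ q := sub_one_sq_le_div_sq hc hn0 hpc
  have hca : c ≤ (√c + 1) ^ 2 := le_sqrt_add_one_sq hc0.le
  have hstep : ∀ k, k + 2 ≤ p → A (k + 2) / scaledCatalan (k + 2)
      ≤ ((√c + 1) ^ 2 + q / c) * (A (k + 1) / scaledCatalan (k + 1))
        + q * (A k / scaledCatalan k) := by
    intro k hk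
    have hdq : -((c - 1) ^ 2 - ((k + 1 : ℕ) : ℝ) ^ 2 / (n : ℝ) ^ 2) ≤ q := by
      have : ((k + 1 : ℕ) : ℝ) ≤ p := by exact_mod_cast (by omega : k + 1 ≤ p)
      have : ((k + 1 : ℕ) : ℝ) ^ 2 / (n : ℝ) ^ 2 ≤ q := by rw [hq_def]; gcongr
      nlinarith [sq_nonneg (c - 1)]
    calc A (k + 1 + 1) / scaledCatalan (k + 1 + 1)
        ≤ 2 * (c + 1) * (A (k + 1) / scaledCatalan (k + 1)) + q * (A k / scaledCatalan k) := by
          rw [hrec (k + 1) (by omega) (by omega)]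
          simpa using div_scaledCatalan_le (k := k + 1) (by omega) hq hdq (hApos k (by omega)).le
      _ ≤ _ := by
          have := (div_pos (hApos (k + 1) (by omega)) (scaledCatalan_pos (k + 1))).le
          gcongr
          exact two_mul_add_one_le_sqrt_add_one_sq_add_div hc0 hcq
  have hcx : c ≤ (√c + 1) ^ 2 * (1 + 2 * q / c ^ 2) :=
    hca.trans (le_mul_of_one_le_right (by positivity) (le_add_of_nonneg_right (by positivity)))
  have hbound := le_mul_pow_of_le_two_step (N := fun k => A k / scaledCatalan k) (C := 4)
    (by norm_num) (by positivity) (by positivity) hq (add_div_mul_add_le_sq hc0 hca hq)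
    (by simp [scaledCatalan, hA0]) (by simp [scaledCatalan, hA1]; linarith) hstep
  intro k _ hkp
  refine (hbound k hkp).trans_eq ?_
  rw [mul_pow, ← pow_mul, hq_def]
  field_simp

/-- Bound on the complex Wishart moments in the regime `p ≥ (c-1)n`: if `A_0 = 1`,
`A_1 = c` and `A` satisfies the Haagerup–Thorbjørnsen recursion, then
`N_k = A_k/χ_k` (where `χ_k = C_k/4^k` are scaled Catalan numbers) satisfies
`N_k ≤ 4(√c+1)^{2k}(1 + 2p²/(c²n²))^k` for all `1 ≤ k ≤ p`. -/
theorem wishart_moment_bound_large_p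
    (c : ℝ) (hc : 1 ≤ c) (n : ℕ) (hn : 1 ≤ n) (p : ℕ) (hp : 1 ≤ p)
    (hpc : (c - 1) * n ≤ (p : ℝ))
    (A : ℕ → ℝ) (hApos : ∀ k, k ≤ p → 0 < A k)
    (hA0 : A 0 = 1) (hA1 : A 1 = c)
    (hrec : ∀ k, 1 ≤ k → k ≤ p - 1 →
      A (k + 1) = 2 * (c + 1) * ((2 * (k : ℝ) + 1) / (2 * (k : ℝ) + 4)) * A k
        - ((c - 1) ^ 2 - (k : ℝ) ^ 2 / (n : ℝ) ^ 2) *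
            (((k : ℝ) - 1) / ((k : ℝ) + 2)) * A (k - 1)) :
    ∀ k, 1 ≤ k → k ≤ p →
      A k / ((catalan k : ℝ) / 4 ^ k)
        ≤ 4 * (Real.sqrt c + 1) ^ (2 * k) *
            (1 + 2 * (p : ℝ) ^ 2 / (c ^ 2 * (n : ℝ) ^ 2)) ^ k :=
  wishart_moment_bound_large_p_general c hc n hn p hpc A hApos hA0 hA1 hrec
end

section
/- Fix reals μ > μ̄ > 0 and D_0, D_1 ≥ 0 with D_1 - μ D_0 < 0, and nonnegative reals (a_k)_{k≥1}. Suppose a nonnegative sequence (D_k)_{0≤k≤p+1} satisfies D_{k+1} ≤ (μ + μ̄) D_k - μμ̄ D_{k-1} + a_k for 1 ≤ k ≤ p. Then D_p ≤ μ^{p-1} D_1 + ∑_{l=1}^{p-1} ((μ^{p-l} - μ̄^{p-l})/(μ - μ̄)) a_l for all p ≥ 1. -/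
open Finset

/-- Discrete Gronwall-type bound for a second-order recursion with characteristic roots
`μ > μ̄ > 0`: if `D` is nonnegative, `D_1 - μ D_0 < 0`, `a_k ≥ 0`, and
`D_{k+1} ≤ (μ + μ̄) D_k - μ μ̄ D_{k-1} + a_k` for `1 ≤ k ≤ p`, then
`D_p ≤ μ^{p-1} D_1 + ∑_{l=1}^{p-1} ((μ^{p-l} - μ̄^{p-l})/(μ - μ̄)) a_l`. -/
theorem second_order_recursion_bound
    (μ μb : ℝ) (hμ : μb < μ) (hμb : 0 < μb)
    (p : ℕ) (hp : 1 ≤ p)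
    (D : ℕ → ℝ) (hDnonneg : ∀ k, k ≤ p + 1 → 0 ≤ D k)
    (a : ℕ → ℝ) (ha : ∀ k, 1 ≤ k → 0 ≤ a k)
    (hD1 : D 1 - μ * D 0 < 0)
    (hrec : ∀ k, 1 ≤ k → k ≤ p →
      D (k + 1) ≤ (μ + μb) * D k - μ * μb * D (k - 1) + a k) :
    D p ≤ μ ^ (p - 1) * D 1
      + ∑ l ∈ Finset.Icc 1 (p - 1), ((μ ^ (p - l) - μb ^ (p - l)) / (μ - μb)) * a l := by
  obtain ⟨q, rfl⟩ : ∃ q, p = q + 1 := ⟨p - 1, by omega⟩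
  have hμ0 : 0 < μ := hμb.trans hμ
  have hden : (0:ℝ) < μ - μb := by linarith
  have hE : ∀ m, m ≤ q + 1 → D (m+1) - μ * D m ≤ ∑ l ∈ Icc 1 m, μb^(m-l) * a l := by
    intro m
    induction m with
    | zero => intro _; simpa using hD1.le
    | succ n ih =>
      intro hn
      have h1 : D (n+1+1) ≤ (μ + μb) * D (n+1) - μ * μb * D (n+1-1) + a (n+1) :=
        hrec (n+1) (by omega) (by omega)
      simp only [Nat.add_sub_cancel] at h1
      have h3 := ih (by omega)
      have h4 : μb * (D (n+1) - μ * D n) ≤ μb * ∑ l ∈ Icc 1 n, μb^(n-l) * a l :=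
        mul_le_mul_of_nonneg_left h3 hμb.le
      have h5 : μb * ∑ l ∈ Icc 1 n, μb^(n-l) * a l + a (n+1)
          = ∑ l ∈ Icc 1 (n+1), μb^(n+1-l) * a l := by
        rw [Finset.sum_Icc_succ_top (by omega : 1 ≤ n+1), Finset.mul_sum]
        simp only [Nat.sub_self, pow_zero, one_mul]
        congr 1
        apply Finset.sum_congr rfl
        intro l hl
        have hl' : l ≤ n := (Finset.mem_Icc.mp hl).2
        have e : n + 1 - l = (n - l) + 1 := by omega
        rw [e, pow_succ]
        ring
      nlinarith [h1, h4, h5]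
  have hDm : ∀ m, m ≤ q → D (m+1) ≤ μ^m * D 1
      + ∑ l ∈ Icc 1 m, ((μ^(m+1-l) - μb^(m+1-l))/(μ - μb)) * a l := by
    intro m
    induction m with
    | zero => intro _; simp
    | succ n ih =>
      intro hn
      have hEn := hE (n+1) (by omega)
      have hIH := ih (by omega)
      have h6 : μ * D (n+1) ≤ μ * (μ^n * D 1
          + ∑ l ∈ Icc 1 n, ((μ^(n+1-l) - μb^(n+1-l))/(μ - μb)) * a l) :=
        mul_le_mul_of_nonneg_left hIH hμ0.le
      have key : μ * (μ^n * D 1 + ∑ l ∈ Icc 1 n, ((μ^(n+1-l) - μb^(n+1-l))/(μ - μb)) * a l)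
          + ∑ l ∈ Icc 1 (n+1), μb^(n+1-l) * a l
          = μ^(n+1) * D 1 + ∑ l ∈ Icc 1 (n+1), ((μ^(n+1+1-l) - μb^(n+1+1-l))/(μ - μb)) * a l := by
        rw [Finset.sum_Icc_succ_top (by omega : 1 ≤ n+1),
            Finset.sum_Icc_succ_top (by omega : 1 ≤ n+1), mul_add, Finset.mul_sum]
        have e1 : n + 1 + 1 - (n+1) = 1 := by omega
        have e2 : n + 1 - (n+1) = 0 := by omega
        rw [e1, e2]
        have hsum : ∑ l ∈ Icc 1 n, μ * (((μ^(n+1-l) - μb^(n+1-l))/(μ - μb)) * a l)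
            + ∑ l ∈ Icc 1 n, μb^(n+1-l) * a l
            = ∑ l ∈ Icc 1 n, ((μ^(n+1+1-l) - μb^(n+1+1-l))/(μ - μb)) * a l := by
          rw [← Finset.sum_add_distrib]
          apply Finset.sum_congr rfl
          intro l hl
          have hl' : l ≤ n := (Finset.mem_Icc.mp hl).2
          have e3 : n + 1 - l = (n - l) + 1 := by omega
          have e4 : n + 1 + 1 - l = (n - l) + 2 := by omega
          rw [e3, e4]
          field_simp
          ring
        have e5 : (μ^1 - μb^1)/(μ - μb) = 1 := by
          rw [pow_one, pow_one, div_self hden.ne']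
        rw [e5, pow_zero, pow_succ]
        linarith [hsum]
      linarith [hEn, h6, key.le]
  simpa using hDm q le_rfl
end
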